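/- arXiv:2410.21114 — 2 statements merged into one kernel-verified Lean document; each statement's English description precedes it below -/
import Mathlib

section
/- (Oleinik-type one-sided inequality.) For every t > 0 and all x, x′ ∈ ℝ with x < x′: x − t·f'(u⁺(x,t)) ≤ x′ − t·f'(u⁻(x′,t)). Consequently, for each fixed t > 0 the maps x ↦ x − t·f'(u⁺(x,t)) and x ↦ x − t·f'(u⁻(x,t)) are nondecreasing on ℝ, and f'(u⁺(x₂,t)) − f'(u⁺(x₁,t)) ≤ (x₂ − x₁)/t as well as f'(u⁻(x₂,t)) − f'(u⁻(x₁,t)) ≤ (x₂ − x₁)/t hold for all x₁ < x₂. -/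
/-!
Substituting `y = x - t f'(s)` gives
`E(u; x, t) = ∫_{x - t f'(u)}^{x - t f'(0)} φ - t (f*(f' u) - f*(f' 0))`, where
`f*(f' u) = u f'(u) - f(u)` is the Legendre transform of `f` at slope `f' u`. Suppose maximisers
`w` at `x` and `v` at `x' > x` had crossing feet `y' = x' - t f'(v) < y = x - t f'(w)`. Choose `a`
and `b` with `x - t f'(a) = y'` and `x' - t f'(b) = y`. Comparing `E(·; x, t)` at `a` and `w`, and
`E(·; x', t)` at `b` and `v`, the two `φ`-integrals over `[y', y]` cancel and leave
`f*(f' a) + f*(f' b) ≥ f*(f' w) + f*(f' v)`. But `f' a + f' b = f' w + f' v` with `f' a, f' b`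
strictly between `f' w` and `f' v`, so this contradicts strict convexity of `f*`. The remaining
claims apply this to `u⁺` at both points, or to `u⁻` at both points.
-/

open MeasureTheory Filter Set

noncomputable def eFun (f φ : ℝ → ℝ) (u x t : ℝ) : ℝ :=
  t * (∫ s in (0:ℝ)..u, deriv (deriv f) s * (φ (x - t * deriv f s) - s))

def maxSet (f φ : ℝ → ℝ) (x t : ℝ) : Set ℝ :=
  {w : ℝ | ∀ v : ℝ, eFun f φ v x t ≤ eFun f φ w x t}

noncomputable def uPlus (f φ : ℝ → ℝ) (x t : ℝ) : ℝ := sInf (maxSet f φ x t)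

noncomputable def uMinus (f φ : ℝ → ℝ) (x t : ℝ) : ℝ := sSup (maxSet f φ x t)

section

variable {f φ : ℝ → ℝ} {M : ℝ}

lemma hasDerivAt_deriv_of_contDiff_two (hf : ContDiff ℝ 2 f) (u : ℝ) :
    HasDerivAt (deriv f) (deriv (deriv f) u) u :=
  ((hf.deriv' (n := 1)).differentiable one_ne_zero u).hasDerivAt

lemma continuous_deriv_deriv_of_contDiff_two (hf : ContDiff ℝ 2 f) :
    Continuous (deriv (deriv f)) :=
  (hf.deriv' (n := 1)).continuous_deriv le_rfl

lemma strictMono_deriv_of_contDiff_two (hf : ContDiff ℝ 2 f)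
    (hconv : ∀ u : ℝ, 0 ≤ deriv (deriv f) u)
    (hdeg : volume {u : ℝ | deriv (deriv f) u = 0} = 0) :
    StrictMono (deriv f) := by
  intro a b hab
  have hint : IntervalIntegrable (deriv (deriv f)) volume a b :=
    (continuous_deriv_deriv_of_contDiff_two hf).intervalIntegrable a b
  have hsupp : volume (Function.support (deriv (deriv f)) ∩ Ioc a b) = volume (Ioc a b) := by
    rw [inter_comm]
    exact measure_inter_conull (by simpa [Function.support, compl_ofPred] using hdeg)
  have hpos : 0 < ∫ s in a..b, deriv (deriv f) s := by
    rw [intervalIntegral.integral_pos_iff_support_of_nonneg_ae (ae_of_all _ hconv) hint, hsupp]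
    simpa using hab
  rw [intervalIntegral.integral_eq_sub_of_hasDerivAt
    (fun u _ => hasDerivAt_deriv_of_contDiff_two hf u) hint] at hpos
  linarith

noncomputable def legendre (f : ℝ → ℝ) (u : ℝ) : ℝ := u * deriv f u - f u

section Legendre

variable {a b p q v w : ℝ}

lemma mul_deriv_sub_lt_legendre_sub (hd : Differentiable ℝ f) (hg : StrictMono (deriv f))
    (hpq : p < q) : p * (deriv f q - deriv f p) < legendre f q - legendre f p := by
  obtain ⟨ξ, hξ, hslope⟩ := exists_deriv_eq_slope f hpq hd.continuous.continuousOn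
    (fun u _ => (hd u).differentiableWithinAt)
  have hmvt : f q - f p = deriv f ξ * (q - p) := by
    rw [hslope]; field_simp [(sub_pos.mpr hpq).ne']
  have : deriv f ξ * (q - p) < deriv f q * (q - p) :=
    mul_lt_mul_of_pos_right (hg hξ.2) (sub_pos.mpr hpq)
  unfold legendre
  linarith

lemma legendre_sub_lt_mul_deriv_sub (hd : Differentiable ℝ f) (hg : StrictMono (deriv f))
    (hpq : p < q) : legendre f q - legendre f p < q * (deriv f q - deriv f p) := by
  obtain ⟨ξ, hξ, hslope⟩ := exists_deriv_eq_slope f hpq hd.continuous.continuousOn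
    (fun u _ => (hd u).differentiableWithinAt)
  have hmvt : f q - f p = deriv f ξ * (q - p) := by
    rw [hslope]; field_simp [(sub_pos.mpr hpq).ne']
  have : deriv f p * (q - p) < deriv f ξ * (q - p) :=
    mul_lt_mul_of_pos_right (hg hξ.1) (sub_pos.mpr hpq)
  unfold legendre
  linarith

lemma legendre_add_lt_legendre_add (hd : Differentiable ℝ f) (hg : StrictMono (deriv f))
    (hwa : w < a) (hwb : w < b) (hav : a < v) (hbv : b < v)
    (hsum : deriv f a + deriv f b = deriv f w + deriv f v) :
    legendre f a + legendre f b < legendre f w + legendre f v := by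
  rcases le_total a b with hab | hba
  · calc legendre f a + legendre f b
        < a * (deriv f a - deriv f w) + legendre f w + legendre f b := by
          linarith [legendre_sub_lt_mul_deriv_sub hd hg hwa]
      _ ≤ b * (deriv f v - deriv f b) + legendre f w + legendre f b := by
          rw [show deriv f v - deriv f b = deriv f a - deriv f w by linarith]
          gcongr
          exact sub_nonneg.mpr (hg.monotone hwa.le)
      _ < legendre f w + legendre f v := by
          linarith [mul_deriv_sub_lt_legendre_sub hd hg hbv]
  · calc legendre f a + legendre f b
        < b * (deriv f b - deriv f w) + legendre f w + legendre f a := by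
          linarith [legendre_sub_lt_mul_deriv_sub hd hg hwb]
      _ ≤ a * (deriv f v - deriv f a) + legendre f w + legendre f a := by
          rw [show deriv f v - deriv f a = deriv f b - deriv f w by linarith]
          gcongr
          exact sub_nonneg.mpr (hg.monotone hwb.le)
      _ < legendre f w + legendre f v := by
          linarith [mul_deriv_sub_lt_legendre_sub hd hg hav]

lemma intervalIntegrable_deriv_deriv_mul_id (hf : ContDiff ℝ 2 f) (a b : ℝ) :
    IntervalIntegrable (fun s => deriv (deriv f) s * s) volume a b :=
  ((continuous_deriv_deriv_of_contDiff_two hf).mul continuous_id).intervalIntegrable a b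

lemma integral_deriv_deriv_mul_eq_legendre_sub (hf : ContDiff ℝ 2 f) (a b : ℝ) :
    ∫ s in a..b, deriv (deriv f) s * s = legendre f b - legendre f a := by
  refine intervalIntegral.integral_eq_sub_of_hasDerivAt (fun u _ => ?_)
    (intervalIntegrable_deriv_deriv_mul_id hf a b)
  have := ((hasDerivAt_id u).mul (hasDerivAt_deriv_of_contDiff_two hf u)).sub
    ((hf.differentiable two_ne_zero) u).hasDerivAt
  convert this using 1
  · rfl
  · simp only [id]
    ring

end Legendre

lemma intervalIntegrable_of_abs_le {a b : ℝ} (hφmeas : Measurable φ) (hφbdd : ∀ y, |φ y| ≤ M) :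
    IntervalIntegrable φ volume a b := by
  rw [intervalIntegrable_iff]
  exact Measure.integrableOn_of_bounded measure_Ioc_lt_top.ne hφmeas.aestronglyMeasurable
    (ae_of_all _ fun y => (Real.norm_eq_abs _).trans_le (hφbdd y))

lemma intervalIntegrable_comp_sub_mul_deriv (hf : ContDiff ℝ 2 f) (hφmeas : Measurable φ)
    (hφbdd : ∀ y, |φ y| ≤ M) (x t a b : ℝ) :
    IntervalIntegrable (fun s => φ (x - t * deriv f s)) volume a b :=
  intervalIntegrable_of_abs_le
    (hφmeas.comp (measurable_const.sub (measurable_const.mul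
      (hf.continuous_deriv one_le_two).measurable))) (fun _ => hφbdd _)

lemma intervalIntegrable_eFun_integrand (hf : ContDiff ℝ 2 f) (hφmeas : Measurable φ)
    (hφbdd : ∀ y, |φ y| ≤ M) (x t a b : ℝ) :
    IntervalIntegrable (fun s => deriv (deriv f) s * (φ (x - t * deriv f s) - s)) volume a b :=
  ((intervalIntegrable_comp_sub_mul_deriv hf hφmeas hφbdd x t a b).sub
    (continuous_id.intervalIntegrable a b)).continuousOn_mul
      (continuous_deriv_deriv_of_contDiff_two hf).continuousOn

lemma continuous_eFun (hf : ContDiff ℝ 2 f) (hφmeas : Measurable φ) (hφbdd : ∀ y, |φ y| ≤ M)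
    (x t : ℝ) : Continuous fun u => eFun f φ u x t :=
  continuous_const.mul (intervalIntegral.continuous_primitive
    (intervalIntegrable_eFun_integrand hf hφmeas hφbdd x t) 0)

lemma eFun_eq (hf : ContDiff ℝ 2 f) (hconv : ∀ u : ℝ, 0 ≤ deriv (deriv f) u)
    (hφmeas : Measurable φ) (hφbdd : ∀ y, |φ y| ≤ M) {t : ℝ} (ht : 0 ≤ t) (u x : ℝ) :
    eFun f φ u x t = (∫ y in (x - t * deriv f u)..(x - t * deriv f 0), φ y)
      - t * (legendre f u - legendre f 0) := by
  have hsubst : ∫ s in (0:ℝ)..u, φ (x - t * deriv f s) * -(t * deriv (deriv f) s)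
      = ∫ y in (x - t * deriv f 0)..(x - t * deriv f u), φ y :=
    intervalIntegral.integral_comp_mul_deriv_of_deriv_nonpos (g := φ)
      (continuous_const.sub (continuous_const.mul (hf.continuous_deriv one_le_two))).continuousOn
      (fun s _ => ((hasDerivAt_deriv_of_contDiff_two hf s).const_mul t).const_sub x)
      (fun s _ => neg_nonpos.mpr (mul_nonneg ht (hconv s)))
  have hsplit : ∫ s in (0:ℝ)..u, deriv (deriv f) s * (φ (x - t * deriv f s) - s)
      = (∫ s in (0:ℝ)..u, deriv (deriv f) s * φ (x - t * deriv f s))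
        - ∫ s in (0:ℝ)..u, deriv (deriv f) s * s := by
    rw [← intervalIntegral.integral_sub
      ((intervalIntegrable_comp_sub_mul_deriv hf hφmeas hφbdd x t 0 u).continuousOn_mul
        (continuous_deriv_deriv_of_contDiff_two hf).continuousOn)
      (intervalIntegrable_deriv_deriv_mul_id hf 0 u)]
    simp only [mul_sub]
  have hφpart : t * ∫ s in (0:ℝ)..u, deriv (deriv f) s * φ (x - t * deriv f s)
      = ∫ y in (x - t * deriv f u)..(x - t * deriv f 0), φ y := by
    rw [intervalIntegral.integral_symm (x - t * deriv f 0), ← hsubst,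
      ← intervalIntegral.integral_neg, ← intervalIntegral.integral_const_mul]
    congr 1
    ext s
    ring
  rw [eFun, hsplit, mul_sub, hφpart, integral_deriv_deriv_mul_eq_legendre_sub hf]

lemma eFun_sub_eFun (hf : ContDiff ℝ 2 f) (hconv : ∀ u : ℝ, 0 ≤ deriv (deriv f) u)
    (hφmeas : Measurable φ) (hφbdd : ∀ y, |φ y| ≤ M) {t : ℝ} (ht : 0 ≤ t) (a b x : ℝ) :
    eFun f φ b x t - eFun f φ a x t = (∫ y in (x - t * deriv f b)..(x - t * deriv f a), φ y)
      - t * (legendre f b - legendre f a) := by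
  rw [eFun_eq hf hconv hφmeas hφbdd ht, eFun_eq hf hconv hφmeas hφbdd ht,
    ← intervalIntegral.integral_add_adjacent_intervals (intervalIntegrable_of_abs_le hφmeas hφbdd)
      (intervalIntegrable_of_abs_le hφmeas hφbdd)]
  ring

section Maximizers

variable {t x u : ℝ}

lemma eFun_lt_eFun_of_lt_legendre_sub (hf : ContDiff ℝ 2 f)
    (hconv : ∀ u : ℝ, 0 ≤ deriv (deriv f) u) (hφmeas : Measurable φ) (hφbdd : ∀ y, |φ y| ≤ M)
    (ht : 0 < t) {a b : ℝ} (hlt : M * |deriv f b - deriv f a| < legendre f b - legendre f a) :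
    eFun f φ b x t < eFun f φ a x t := by
  have hint : (∫ y in (x - t * deriv f b)..(x - t * deriv f a), φ y)
      ≤ t * (M * |deriv f b - deriv f a|) := by
    refine (le_abs_self _).trans ((intervalIntegral.norm_integral_le_of_norm_le_const
      fun y _ => (Real.norm_eq_abs _).trans_le (hφbdd y)).trans_eq ?_)
    rw [show x - t * deriv f a - (x - t * deriv f b) = t * (deriv f b - deriv f a) by ring,
      abs_mul, abs_of_pos ht]
    ring
  have := mul_lt_mul_of_pos_left hlt ht
  linarith [eFun_sub_eFun hf hconv hφmeas hφbdd ht.le a b x]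

lemma eFun_lt_eFun_bound_of_bound_lt (hf : ContDiff ℝ 2 f)
    (hconv : ∀ u : ℝ, 0 ≤ deriv (deriv f) u) (hg : StrictMono (deriv f))
    (hφmeas : Measurable φ) (hφbdd : ∀ y, |φ y| ≤ M) (ht : 0 < t) (hu : M < u) :
    eFun f φ u x t < eFun f φ M x t := by
  refine eFun_lt_eFun_of_lt_legendre_sub hf hconv hφmeas hφbdd ht ?_
  rw [abs_of_pos (sub_pos.mpr (hg hu))]
  exact mul_deriv_sub_lt_legendre_sub (hf.differentiable two_ne_zero) hg hu

lemma eFun_lt_eFun_neg_bound_of_lt_neg_bound (hf : ContDiff ℝ 2 f)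
    (hconv : ∀ u : ℝ, 0 ≤ deriv (deriv f) u) (hg : StrictMono (deriv f))
    (hφmeas : Measurable φ) (hφbdd : ∀ y, |φ y| ≤ M) (ht : 0 < t) (hu : u < -M) :
    eFun f φ u x t < eFun f φ (-M) x t := by
  refine eFun_lt_eFun_of_lt_legendre_sub hf hconv hφmeas hφbdd ht ?_
  rw [abs_of_neg (sub_neg.mpr (hg hu))]
  linarith [legendre_sub_lt_mul_deriv_sub (hf.differentiable two_ne_zero) hg hu]

lemma maxSet_subset_Icc (hf : ContDiff ℝ 2 f) (hconv : ∀ u : ℝ, 0 ≤ deriv (deriv f) u)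
    (hg : StrictMono (deriv f)) (hφmeas : Measurable φ) (hφbdd : ∀ y, |φ y| ≤ M) (ht : 0 < t) :
    maxSet f φ x t ⊆ Icc (-M) M := fun w hw => by
  constructor <;> by_contra! h
  · exact (hw (-M)).not_gt (eFun_lt_eFun_neg_bound_of_lt_neg_bound hf hconv hg hφmeas hφbdd ht h)
  · exact (hw M).not_gt (eFun_lt_eFun_bound_of_bound_lt hf hconv hg hφmeas hφbdd ht h)

lemma maxSet_nonempty (hf : ContDiff ℝ 2 f) (hconv : ∀ u : ℝ, 0 ≤ deriv (deriv f) u)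
    (hg : StrictMono (deriv f)) (hφmeas : Measurable φ) (hφbdd : ∀ y, |φ y| ≤ M) (ht : 0 < t) :
    (maxSet f φ x t).Nonempty := by
  have hM : -M ≤ M := neg_le_self ((abs_nonneg _).trans (hφbdd 0))
  obtain ⟨w, -, hw⟩ := isCompact_Icc.exists_isMaxOn (nonempty_Icc.mpr hM)
    (continuous_eFun hf hφmeas hφbdd x t).continuousOn
  refine ⟨w, fun v => ?_⟩
  rcases lt_or_ge M v with hMv | hvM
  · exact (eFun_lt_eFun_bound_of_bound_lt hf hconv hg hφmeas hφbdd ht hMv).le.trans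
      (hw ⟨hM, le_rfl⟩)
  rcases lt_or_ge v (-M) with hvM' | hMv'
  · exact (eFun_lt_eFun_neg_bound_of_lt_neg_bound hf hconv hg hφmeas hφbdd ht hvM').le.trans
      (hw ⟨le_rfl, hM⟩)
  · exact hw ⟨hMv', hvM⟩

lemma isClosed_maxSet (hf : ContDiff ℝ 2 f) (hφmeas : Measurable φ) (hφbdd : ∀ y, |φ y| ≤ M) :
    IsClosed (maxSet f φ x t) := by
  simp only [maxSet, ofPred_forall]
  exact isClosed_iInter fun v => isClosed_le continuous_const (continuous_eFun hf hφmeas hφbdd x t)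

lemma uPlus_mem_maxSet (hf : ContDiff ℝ 2 f) (hconv : ∀ u : ℝ, 0 ≤ deriv (deriv f) u)
    (hg : StrictMono (deriv f)) (hφmeas : Measurable φ) (hφbdd : ∀ y, |φ y| ≤ M) (ht : 0 < t) :
    uPlus f φ x t ∈ maxSet f φ x t :=
  (isClosed_maxSet hf hφmeas hφbdd).csInf_mem (maxSet_nonempty hf hconv hg hφmeas hφbdd ht)
    (bddBelow_Icc.mono (maxSet_subset_Icc hf hconv hg hφmeas hφbdd ht))

lemma uMinus_mem_maxSet (hf : ContDiff ℝ 2 f) (hconv : ∀ u : ℝ, 0 ≤ deriv (deriv f) u)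
    (hg : StrictMono (deriv f)) (hφmeas : Measurable φ) (hφbdd : ∀ y, |φ y| ≤ M) (ht : 0 < t) :
    uMinus f φ x t ∈ maxSet f φ x t :=
  (isClosed_maxSet hf hφmeas hφbdd).csSup_mem (maxSet_nonempty hf hconv hg hφmeas hφbdd ht)
    (bddAbove_Icc.mono (maxSet_subset_Icc hf hconv hg hφmeas hφbdd ht))

end Maximizers

section Oleinik

variable {t : ℝ}

lemma sub_mul_deriv_le_of_mem_maxSet (hf : ContDiff ℝ 2 f)
    (hconv : ∀ u : ℝ, 0 ≤ deriv (deriv f) u) (hg : StrictMono (deriv f))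
    (hφmeas : Measurable φ) (hφbdd : ∀ y, |φ y| ≤ M) (ht : 0 < t) {x x' w v : ℝ}
    (hxx' : x < x') (hw : w ∈ maxSet f φ x t) (hv : v ∈ maxSet f φ x' t) :
    x - t * deriv f w ≤ x' - t * deriv f v := by
  by_contra! hcross
  set c := (x' - x) / t
  have htc : t * c = x' - x := mul_div_cancel₀ _ ht.ne'
  have hc : 0 < c := div_pos (sub_pos.mpr hxx') ht
  have hgap : deriv f w + c < deriv f v :=
    lt_of_mul_lt_mul_left (by linarith : t * (deriv f w + c) < t * deriv f v) ht.le
  have hwv : w < v := hg.lt_iff_lt.mp (by linarith)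
  have hcont := (hf.continuous_deriv one_le_two).continuousOn (s := Icc w v)
  obtain ⟨a, -, ha⟩ := intermediate_value_Icc hwv.le hcont
    (show deriv f v - c ∈ Icc (deriv f w) (deriv f v) from ⟨by linarith, by linarith⟩)
  obtain ⟨b, -, hb⟩ := intermediate_value_Icc hwv.le hcont
    (show deriv f w + c ∈ Icc (deriv f w) (deriv f v) from ⟨by linarith, by linarith⟩)
  have hya : x - t * deriv f a = x' - t * deriv f v := by rw [ha]; linear_combination htc
  have hyb : x' - t * deriv f b = x - t * deriv f w := by rw [hb]; linear_combination -htc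
  have hconvex := legendre_add_lt_legendre_add (hf.differentiable two_ne_zero) hg
    (hg.lt_iff_lt.mp (by linarith) : w < a) (hg.lt_iff_lt.mp (by linarith) : w < b)
    (hg.lt_iff_lt.mp (by linarith) : a < v) (hg.lt_iff_lt.mp (by linarith) : b < v)
    (by linarith)
  have hx := eFun_sub_eFun hf hconv hφmeas hφbdd ht.le a w x
  have hx' := eFun_sub_eFun hf hconv hφmeas hφbdd ht.le b v x'
  rw [hya] at hx
  rw [hyb, intervalIntegral.integral_symm] at hx'
  have := mul_lt_mul_of_pos_left hconvex ht
  linarith [hw a, hv b]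

lemma monotone_sub_mul_deriv_of_mem_maxSet (hf : ContDiff ℝ 2 f)
    (hconv : ∀ u : ℝ, 0 ≤ deriv (deriv f) u) (hg : StrictMono (deriv f))
    (hφmeas : Measurable φ) (hφbdd : ∀ y, |φ y| ≤ M) (ht : 0 < t) {u : ℝ → ℝ}
    (hu : ∀ x, u x ∈ maxSet f φ x t) : Monotone fun x => x - t * deriv f (u x) := by
  intro x x' hxx'
  rcases hxx'.lt_or_eq with hlt | rfl
  · exact sub_mul_deriv_le_of_mem_maxSet hf hconv hg hφmeas hφbdd ht hlt (hu x) (hu x')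
  · rfl

lemma deriv_sub_deriv_le_div_of_monotone (ht : 0 < t) {u : ℝ → ℝ}
    (hmono : Monotone fun x => x - t * deriv f (u x)) {x₁ x₂ : ℝ} (h : x₁ ≤ x₂) :
    deriv f (u x₂) - deriv f (u x₁) ≤ (x₂ - x₁) / t := by
  rw [le_div_iff₀ ht]
  linarith [hmono h]

end Oleinik

end

/-- the Oleinik-type one-sided inequality. -/
theorem stmt1_oleinik_one_sided
    (f φ : ℝ → ℝ) (M : ℝ)
    (hf : ContDiff ℝ 2 f)
    (hconv : ∀ u : ℝ, 0 ≤ deriv (deriv f) u)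
    (hdeg : volume {u : ℝ | deriv (deriv f) u = 0} = 0)
    (hφmeas : Measurable φ)
    (hφbdd : ∀ x : ℝ, |φ x| ≤ M) :
    (∀ t : ℝ, 0 < t → ∀ x x' : ℝ, x < x' →
      x - t * deriv f (uPlus f φ x t) ≤ x' - t * deriv f (uMinus f φ x' t)) ∧
    (∀ t : ℝ, 0 < t → Monotone (fun x : ℝ => x - t * deriv f (uPlus f φ x t))) ∧
    (∀ t : ℝ, 0 < t → Monotone (fun x : ℝ => x - t * deriv f (uMinus f φ x t))) ∧
    (∀ t : ℝ, 0 < t → ∀ x₁ x₂ : ℝ, x₁ < x₂ →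
      deriv f (uPlus f φ x₂ t) - deriv f (uPlus f φ x₁ t) ≤ (x₂ - x₁) / t) ∧
    (∀ t : ℝ, 0 < t → ∀ x₁ x₂ : ℝ, x₁ < x₂ →
      deriv f (uMinus f φ x₂ t) - deriv f (uMinus f φ x₁ t) ≤ (x₂ - x₁) / t) := by
  have hg := strictMono_deriv_of_contDiff_two hf hconv hdeg
  have hplus t (ht : 0 < t) x := uPlus_mem_maxSet (x := x) hf hconv hg hφmeas hφbdd ht
  have hminus t (ht : 0 < t) x := uMinus_mem_maxSet (x := x) hf hconv hg hφmeas hφbdd ht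
  have hmono_plus t (ht : 0 < t) :=
    monotone_sub_mul_deriv_of_mem_maxSet hf hconv hg hφmeas hφbdd ht (hplus t ht)
  have hmono_minus t (ht : 0 < t) :=
    monotone_sub_mul_deriv_of_mem_maxSet hf hconv hg hφmeas hφbdd ht (hminus t ht)
  exact ⟨fun t ht x x' hxx' => sub_mul_deriv_le_of_mem_maxSet hf hconv hg hφmeas hφbdd ht hxx'
      (hplus t ht x) (hminus t ht x'),
    hmono_plus, hmono_minus,
    fun t ht _ _ h => deriv_sub_deriv_le_div_of_monotone ht (hmono_plus t ht) h.le,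
    fun t ht _ _ h => deriv_sub_deriv_le_div_of_monotone ht (hmono_minus t ht) h.le⟩
end

section
/- (Critical lifespan of a characteristic under power-law degeneracy and data behavior.) Let x₀, c ∈ ℝ and let constants α ≥ 0, N > 0, γ > 0, C₀ < 0 satisfy γ·(1+α) = 1. Assume the one-sided asymptotics: f''(u)/(u−c)^α → N as u → c from the right, and (φ(x₀+l) − c)/(sgn(l)·|l|^γ) → C₀ as l → 0 from the left (equivalently, (c − φ(x₀+l))/|l|^γ → C₀ as l → 0⁻). Set t̄ := (γ·N·|C₀|^{1+α})^{−1} ∈ (0,∞). Then: (a) for every t ∈ (0, t̄) there exists δ > 0 such that for all u ∈ (c, c+δ), ∫_{x₀}^{x₀ + t(f'(c) − f'(u))} (φ(ξ) − c) dξ > − t · ∫_c^u (s − c)·f''(s) ds; (b) for every t > t̄ there exists δ > 0 such that for all u ∈ (c, c+δ), ∫_{x₀}^{x₀ + t(f'(c) − f'(u))} (φ(ξ) − c) dξ < − t · ∫_c^u (s − c)·f''(s) ds. (All integrals are signed interval integrals; thus t̄ is the critical time at which the compression of characteristics emitting from the left of x₀ overtakes the ray x = x₀ + t·f'(c).) 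-/
/-!
Write `x = u - c`. Integrating the power laws of `f''` and of the data, the displacement
`r = t (f'(u) - f'(c))` behaves like `t N γ x ^ (α + 1)`, the right-hand side
`t ∫ (s - c) f''` like `t N x ^ (α + 2) / (α + 2)`, and the data integral over an interval of
length `r` left of `x₀` like `-|C₀| r ^ (γ + 1) / (γ + 1)`. Since `(α + 1) (γ + 1) = α + 2`,
both sides of the inequality are of exact order `x ^ (α + 2)`; their leading coefficients
differ by `t N / (α + 2) · (1 - (t / t̄) ^ γ)`, whose sign decides the comparison for small `x`.
-/

open MeasureTheory Filter Set Topology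

theorem integral_sub_rpow {c u p : ℝ} (hp : -1 < p) :
    ∫ s in c..u, (s - c) ^ p = (u - c) ^ (p + 1) / (p + 1) := by
  rw [intervalIntegral.integral_comp_sub_right (· ^ p), integral_rpow (Or.inl hp), sub_self,
    Real.zero_rpow (by linarith), sub_zero]

theorem intervalIntegrable_sub_rpow {c u p : ℝ} (hp : -1 < p) :
    IntervalIntegrable (fun s => (s - c) ^ p) volume c u := by
  simpa using (intervalIntegral.intervalIntegrable_rpow' hp (a := 0) (b := u - c)).comp_sub_right c

theorem tendsto_integral_div_rpow_nhdsGT {g : ℝ → ℝ} {c p L : ℝ} (hp : -1 < p)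
    (hg_int : ∀ u, IntervalIntegrable g volume c u)
    (hg : Tendsto (fun s => g s / (s - c) ^ p) (𝓝[>] c) (𝓝 L)) :
    Tendsto (fun u => (∫ s in c..u, g s) / (u - c) ^ (p + 1)) (𝓝[>] c) (𝓝 (L / (p + 1))) := by
  have hp1 : 0 < p + 1 := by linarith
  refine Metric.tendsto_nhds.mpr fun ε hε => ?_
  obtain ⟨b, hb, hclose⟩ := mem_nhdsGT_iff_exists_Ioo_subset.mp
    (Metric.tendsto_nhds.mp hg (ε * (p + 1) / 2) (by positivity))
  filter_upwards [Ioo_mem_nhdsGT hb] with u hu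
  have hq : 0 < (u - c) ^ (p + 1) := Real.rpow_pos_of_pos (sub_pos.mpr hu.1) _
  have herr : |(∫ s in c..u, g s) - L * ((u - c) ^ (p + 1) / (p + 1))|
      ≤ ε * (p + 1) / 2 * ((u - c) ^ (p + 1) / (p + 1)) := by
    have hsplit : (∫ s in c..u, g s) - L * ((u - c) ^ (p + 1) / (p + 1))
        = ∫ s in c..u, (g s - L * (s - c) ^ p) := by
      rw [intervalIntegral.integral_sub (hg_int u) ((intervalIntegrable_sub_rpow hp).const_mul L),
        intervalIntegral.integral_const_mul, integral_sub_rpow hp]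
    rw [hsplit, ← integral_sub_rpow hp, ← intervalIntegral.integral_const_mul,
      ← Real.norm_eq_abs]
    refine intervalIntegral.norm_integral_le_of_norm_le hu.1.le (ae_of_all _ fun s hs => ?_)
      ((intervalIntegrable_sub_rpow hp).const_mul _)
    have hpow : 0 < (s - c) ^ p := Real.rpow_pos_of_pos (sub_pos.mpr hs.1) p
    have hgs : |g s / (s - c) ^ p - L| < ε * (p + 1) / 2 := hclose ⟨hs.1, hs.2.trans_lt hu.2⟩
    calc ‖g s - L * (s - c) ^ p‖ = |g s / (s - c) ^ p - L| * (s - c) ^ p := by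
          rw [Real.norm_eq_abs, ← abs_of_pos hpow, ← abs_mul, abs_of_pos hpow, sub_mul,
            div_mul_cancel₀ _ hpow.ne']
      _ ≤ ε * (p + 1) / 2 * (s - c) ^ p := by gcongr
  rw [Real.dist_eq]
  have hq' := hq.ne'
  calc |(∫ s in c..u, g s) / (u - c) ^ (p + 1) - L / (p + 1)|
      = |(∫ s in c..u, g s) - L * ((u - c) ^ (p + 1) / (p + 1))| / (u - c) ^ (p + 1) := by
        rw [← abs_of_pos hq, ← abs_div, abs_of_pos hq]
        congr 1
        field_simp
    _ ≤ ε / 2 := by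
        rw [div_le_iff₀ hq]
        exact herr.trans_eq (by field_simp)
    _ < ε := half_lt_self hε

theorem tendsto_comp_div_rpow_nhdsGT {E r : ℝ → ℝ} {c a b p q : ℝ} (ha : 0 < a) (hq : 0 < q)
    (hr : Tendsto (fun u => r u / (u - c) ^ q) (𝓝[>] c) (𝓝 a))
    (hE : Tendsto (fun y => E y / y ^ p) (𝓝[>] 0) (𝓝 b)) :
    Tendsto (fun u => E (r u) / (u - c) ^ (q * p)) (𝓝[>] c) (𝓝 (b * a ^ p)) := by
  have hxq : ∀ᶠ u in 𝓝[>] c, 0 < (u - c) ^ q := by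
    filter_upwards [self_mem_nhdsWithin] with u hu
    exact Real.rpow_pos_of_pos (sub_pos.mpr hu) q
  have hrpos : ∀ᶠ u in 𝓝[>] c, 0 < r u := by
    filter_upwards [hr.eventually (lt_mem_nhds ha), hxq] with u hru hx
    exact (div_pos_iff_of_pos_right hx).mp hru
  have hr0 : Tendsto r (𝓝[>] c) (𝓝[>] 0) := by
    have hx : Tendsto (fun u => (u - c) ^ q) (𝓝[>] c) (𝓝 0) :=
      Tendsto.rpow_const_nhds_zero
        (tendsto_sub_nhds_zero_iff.mpr (tendsto_nhdsWithin_of_tendsto_nhds tendsto_id)) hq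
    refine tendsto_nhdsWithin_iff.mpr ⟨?_, hrpos⟩
    rw [← zero_mul a]
    refine (hx.mul hr).congr' ?_
    filter_upwards [hxq] with u hx
    field_simp
  refine ((hE.comp hr0).mul (hr.rpow_const (Or.inl ha.ne'))).congr' ?_
  filter_upwards [hrpos, hxq, self_mem_nhdsWithin] with u hru hx hu
  rw [Function.comp_apply, Real.div_rpow hru.le hx.le, Real.rpow_mul (sub_pos.mpr hu).le]
  field_simp [(Real.rpow_pos_of_pos hru p).ne']

theorem exists_forall_Ioo_lt_of_tendsto_div_rpow {F G : ℝ → ℝ} {c p L₁ L₂ : ℝ} (hL : L₁ < L₂)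
    (hF : Tendsto (fun u => F u / (u - c) ^ p) (𝓝[>] c) (𝓝 L₁))
    (hG : Tendsto (fun u => G u / (u - c) ^ p) (𝓝[>] c) (𝓝 L₂)) :
    ∃ δ, 0 < δ ∧ ∀ u ∈ Ioo c (c + δ), F u < G u := by
  obtain ⟨b, hb, hsub⟩ := mem_nhdsGT_iff_exists_Ioo_subset.mp (hF.eventually_lt hG hL)
  refine ⟨b - c, sub_pos.mpr hb, fun u hu => ?_⟩
  rw [add_sub_cancel] at hu
  exact (div_lt_div_iff_of_pos_right (Real.rpow_pos_of_pos (sub_pos.mpr hu.1) p)).mp (hsub hu)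

theorem tendsto_integral_left_div_rpow {φ : ℝ → ℝ} {x₀ c γ C : ℝ} (hγ : -1 < γ)
    (hφ : ∀ a b, IntervalIntegrable φ volume a b)
    (hdata : Tendsto (fun l => (c - φ (x₀ + l)) / |l| ^ γ) (𝓝[<] 0) (𝓝 C)) :
    Tendsto (fun r => (∫ ξ in x₀..x₀ - r, (φ ξ - c)) / r ^ (γ + 1)) (𝓝[>] 0)
      (𝓝 (C / (γ + 1))) := by
  have hreflect : ∀ r, ∫ ξ in x₀..x₀ - r, (φ ξ - c) = ∫ y in 0..r, (c - φ (x₀ - y)) := by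
    intro r
    rw [intervalIntegral.integral_comp_sub_left (fun ξ => c - φ ξ), sub_zero,
      intervalIntegral.integral_symm, ← intervalIntegral.integral_neg]
    simp only [neg_sub]
  have hint : ∀ u, IntervalIntegrable (fun y => c - φ (x₀ - y)) volume 0 u := fun u =>
    intervalIntegrable_const.sub (by simpa using (hφ x₀ (x₀ - u)).comp_sub_left x₀)
  have hratio : Tendsto (fun y => (c - φ (x₀ - y)) / (y - 0) ^ γ) (𝓝[>] 0) (𝓝 C) := by
    refine (hdata.comp (neg_zero (G := ℝ) ▸ tendsto_neg_nhdsGT_neg)).congr' ?_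
    filter_upwards [self_mem_nhdsWithin] with y hy
    simp [abs_of_pos (show (0 : ℝ) < y from hy), sub_eq_add_neg]
  simpa only [hreflect, sub_zero] using tendsto_integral_div_rpow_nhdsGT hγ hint hratio

theorem tendsto_deriv_sub_div_rpow {f : ℝ → ℝ} {c α N : ℝ} (hf : ContDiff ℝ 2 f) (hα : -1 < α)
    (hflux : Tendsto (fun u => deriv (deriv f) u / (u - c) ^ α) (𝓝[>] c) (𝓝 N)) :
    Tendsto (fun u => (deriv f u - deriv f c) / (u - c) ^ (α + 1)) (𝓝[>] c)
      (𝓝 (N / (α + 1))) := by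
  have hint : ∀ a b, IntervalIntegrable (deriv (deriv f)) volume a b := fun a b =>
    hf.deriv'.continuous_deriv_one.intervalIntegrable a b
  simpa only [intervalIntegral.integral_deriv_eq_sub
    (fun x _ => hf.differentiable_deriv_two x) (hint _ _)]
    using tendsto_integral_div_rpow_nhdsGT hα (hint c) hflux

theorem tendsto_integral_sub_mul_div_rpow {g : ℝ → ℝ} {c α N : ℝ} (hα : -2 < α)
    (hg_int : ∀ u, IntervalIntegrable g volume c u)
    (hg : Tendsto (fun s => g s / (s - c) ^ α) (𝓝[>] c) (𝓝 N)) :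
    Tendsto (fun u => (∫ s in c..u, (s - c) * g s) / (u - c) ^ (α + 2)) (𝓝[>] c)
      (𝓝 (N / (α + 2))) := by
  have hweighted : Tendsto (fun s => (s - c) * g s / (s - c) ^ (α + 1)) (𝓝[>] c) (𝓝 N) := by
    refine hg.congr' ?_
    filter_upwards [self_mem_nhdsWithin] with s hs
    have hs' : s - c ≠ 0 := (sub_pos.mpr hs).ne'
    rw [Real.rpow_add_one hs']
    field_simp
  have := tendsto_integral_div_rpow_nhdsGT (by linarith)
    (fun u => (hg_int u).continuousOn_mul (by fun_prop)) hweighted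
  rwa [add_assoc, one_add_one_eq_two] at this

theorem tendsto_integral_along_characteristic_div_rpow {f φ : ℝ → ℝ} {x₀ c α N γ C₀ t : ℝ}
    (hf : ContDiff ℝ 2 f) (hφ : ∀ a b, IntervalIntegrable φ volume a b) (hα : -1 < α)
    (hN : 0 < N) (ht : 0 < t) (hγα : γ * (1 + α) = 1)
    (hflux : Tendsto (fun u => deriv (deriv f) u / (u - c) ^ α) (𝓝[>] c) (𝓝 N))
    (hdata : Tendsto (fun l => (c - φ (x₀ + l)) / |l| ^ γ) (𝓝[<] 0) (𝓝 C₀)) :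
    Tendsto
      (fun u => (∫ ξ in x₀..x₀ + t * (deriv f c - deriv f u), (φ ξ - c)) / (u - c) ^ (α + 2))
      (𝓝[>] c) (𝓝 (C₀ / (γ + 1) * (t * (N / (α + 1))) ^ (γ + 1))) := by
  have hα1 : 0 < α + 1 := by linarith
  have hγ : -1 < γ := by nlinarith
  have hr : Tendsto (fun u => t * (deriv f u - deriv f c) / (u - c) ^ (α + 1)) (𝓝[>] c)
      (𝓝 (t * (N / (α + 1)))) := by
    simpa only [mul_div_assoc] using (tendsto_deriv_sub_div_rpow hf hα hflux).const_mul t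
  have := tendsto_comp_div_rpow_nhdsGT (mul_pos ht (div_pos hN hα1)) hα1 hr
    (tendsto_integral_left_div_rpow hγ hφ hdata)
  rw [show (α + 1) * (γ + 1) = α + 2 by linear_combination hγα] at this
  refine this.congr fun u => ?_
  rw [show x₀ - t * (deriv f u - deriv f c) = x₀ + t * (deriv f c - deriv f u) by ring]

theorem limit_gap_eq_mul_one_sub_rpow {C₀ N α γ t : ℝ} (hC₀ : C₀ < 0) (hN : 0 ≤ N) (ht : 0 ≤ t)
    (hα : -1 < α) (hγα : γ * (1 + α) = 1) :
    C₀ / (γ + 1) * (t * (N / (α + 1))) ^ (γ + 1) - -(t * (N / (α + 2)))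
      = t * (N / (α + 2)) * (1 - (t * (γ * N * |C₀| ^ (1 + α))) ^ γ) := by
  have hα1 : 0 < α + 1 := by linarith
  have hα2 : α + 2 ≠ 0 := by linarith
  have ha : 0 ≤ t * (N / (α + 1)) := mul_nonneg ht (div_nonneg hN hα1.le)
  have hγeq : γ = 1 / (α + 1) := by field_simp; linear_combination hγα
  have hγ1 : γ + 1 ≠ 0 := by rw [hγeq]; positivity
  have hpow : (t * (γ * N * |C₀| ^ (1 + α))) ^ γ = (t * (N / (α + 1))) ^ γ * |C₀| := by
    rw [show t * (γ * N * |C₀| ^ (1 + α)) = t * (N / (α + 1)) * |C₀| ^ (1 + α) by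
        rw [hγeq]; ring,
      Real.mul_rpow ha (by positivity), ← Real.rpow_mul (abs_nonneg _),
      show (1 + α) * γ = 1 by linear_combination hγα, Real.rpow_one]
  rw [hpow, Real.rpow_add_one' ha hγ1, abs_of_neg hC₀, hγeq]
  field_simp
  ring

theorem stmt11_critical_lifespan_general
    (f φ : ℝ → ℝ) (M : ℝ)
    (hf : ContDiff ℝ 2 f)
    (hφmeas : Measurable φ)
    (hφbdd : ∀ x : ℝ, |φ x| ≤ M)
    (x₀ c α N γ C₀ : ℝ)
    (hα : 0 ≤ α) (hN : 0 < N) (hγ : 0 < γ) (hC₀ : C₀ < 0)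
    (hγα : γ * (1 + α) = 1)
    (hflux : Tendsto (fun u : ℝ => deriv (deriv f) u / (u - c) ^ α)
      (nhdsWithin c (Set.Ioi c)) (nhds N))
    (hdata : Tendsto (fun l : ℝ => (c - φ (x₀ + l)) / |l| ^ γ)
      (nhdsWithin 0 (Set.Iio 0)) (nhds C₀)) :
    (∀ t : ℝ, 0 < t → t < (γ * N * |C₀| ^ (1 + α))⁻¹ →
      ∃ δ : ℝ, 0 < δ ∧ ∀ u ∈ Set.Ioo c (c + δ),
        (∫ ξ in x₀..(x₀ + t * (deriv f c - deriv f u)), (φ ξ - c))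
          > -(t * (∫ s in c..u, (s - c) * deriv (deriv f) s))) ∧
    (∀ t : ℝ, (γ * N * |C₀| ^ (1 + α))⁻¹ < t →
      ∃ δ : ℝ, 0 < δ ∧ ∀ u ∈ Set.Ioo c (c + δ),
        (∫ ξ in x₀..(x₀ + t * (deriv f c - deriv f u)), (φ ξ - c))
          < -(t * (∫ s in c..u, (s - c) * deriv (deriv f) s))) := by
  have hφint : ∀ a b, IntervalIntegrable φ volume a b := fun a b =>
    (intervalIntegrable_const (c := M)).mono_fun hφmeas.aestronglyMeasurable
      (ae_of_all _ fun x => (hφbdd x).trans (le_abs_self M))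
  have hD := fun t (ht : 0 < t) => tendsto_integral_along_characteristic_div_rpow
    hf hφint (by linarith) hN ht hγα hflux hdata
  have hB : ∀ t, Tendsto
      (fun u => -(t * ∫ s in c..u, (s - c) * deriv (deriv f) s) / (u - c) ^ (α + 2))
      (𝓝[>] c) (𝓝 (-(t * (N / (α + 2))))) := fun t => by
    simpa only [neg_div, mul_div_assoc] using ((tendsto_integral_sub_mul_div_rpow (by linarith)
      (fun u => hf.deriv'.continuous_deriv_one.intervalIntegrable c u) hflux).const_mul t).neg
  have hX : 0 < γ * N * |C₀| ^ (1 + α) :=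
    mul_pos (mul_pos hγ hN) (Real.rpow_pos_of_pos (abs_pos.mpr hC₀.ne) _)
  have hκ : ∀ t, 0 < t → 0 < t * (N / (α + 2)) := fun t ht =>
    mul_pos ht (div_pos hN (by linarith))
  refine ⟨fun t ht htc => ?_, fun t htc => ?_⟩
  · refine exists_forall_Ioo_lt_of_tendsto_div_rpow ?_ (hB t) (hD t ht)
    have hsub : (t * (γ * N * |C₀| ^ (1 + α))) ^ γ < 1 := Real.rpow_lt_one (by positivity)
      ((mul_lt_mul_of_pos_right htc hX).trans_eq (inv_mul_cancel₀ hX.ne')) hγ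
    rw [← sub_pos, limit_gap_eq_mul_one_sub_rpow hC₀ hN.le ht.le (by linarith) hγα]
    exact mul_pos (hκ t ht) (by linarith)
  · have ht : 0 < t := (inv_pos.mpr hX).trans htc
    refine exists_forall_Ioo_lt_of_tendsto_div_rpow ?_ (hD t ht) (hB t)
    have hsuper : 1 < (t * (γ * N * |C₀| ^ (1 + α))) ^ γ := Real.one_lt_rpow
      ((inv_mul_cancel₀ hX.ne').symm.trans_lt (mul_lt_mul_of_pos_right htc hX)) hγ
    rw [← sub_neg, limit_gap_eq_mul_one_sub_rpow hC₀ hN.le ht.le (by linarith) hγα]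
    exact mul_neg_of_pos_of_neg (hκ t ht) (by linarith)

/-- critical lifespan of a characteristic under power-law degeneracy of
the flux and power-law behavior of the data from the left of `x₀`. -/
theorem stmt11_critical_lifespan
    (f φ : ℝ → ℝ) (M : ℝ)
    (hf : ContDiff ℝ 2 f)
    (hconv : ∀ u : ℝ, 0 ≤ deriv (deriv f) u)
    (hdeg : volume {u : ℝ | deriv (deriv f) u = 0} = 0)
    (hφmeas : Measurable φ)
    (hφbdd : ∀ x : ℝ, |φ x| ≤ M)
    (x₀ c α N γ C₀ : ℝ)
    (hα : 0 ≤ α) (hN : 0 < N) (hγ : 0 < γ) (hC₀ : C₀ < 0)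
    (hγα : γ * (1 + α) = 1)
    (hflux : Tendsto (fun u : ℝ => deriv (deriv f) u / (u - c) ^ α)
      (nhdsWithin c (Set.Ioi c)) (nhds N))
    (hdata : Tendsto (fun l : ℝ => (c - φ (x₀ + l)) / |l| ^ γ)
      (nhdsWithin 0 (Set.Iio 0)) (nhds C₀)) :
    (∀ t : ℝ, 0 < t → t < (γ * N * |C₀| ^ (1 + α))⁻¹ →
      ∃ δ : ℝ, 0 < δ ∧ ∀ u ∈ Set.Ioo c (c + δ),
        (∫ ξ in x₀..(x₀ + t * (deriv f c - deriv f u)), (φ ξ - c))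
          > -(t * (∫ s in c..u, (s - c) * deriv (deriv f) s))) ∧
    (∀ t : ℝ, (γ * N * |C₀| ^ (1 + α))⁻¹ < t →
      ∃ δ : ℝ, 0 < δ ∧ ∀ u ∈ Set.Ioo c (c + δ),
        (∫ ξ in x₀..(x₀ + t * (deriv f c - deriv f u)), (φ ξ - c))
          < -(t * (∫ s in c..u, (s - c) * deriv (deriv f) s))) :=
  stmt11_critical_lifespan_general f φ M hf hφmeas hφbdd x₀ c α N γ C₀ hα hN hγ hC₀ hγα hflux hdata
end
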